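/- Let G=(V,E) be a finite simple connected graph with maximum degree Δ, and let V = A ∪ B ∪ C be a decomposition satisfying properties (1)–(4). Then #E(A∪C, B) ≥ (1/2 + 1/(3Δ))·MaxCut(G), where MaxCut(G) is the maximum over all partitions V = S ∪ (V∖S) of the number of crossing edges. -/

import Mathlib

open Finset

variable {V : Type*} [Fintype V] [DecidableEq V]

/-- Number of neighbors of `v` lying in `S`. -/
def degIn (G : SimpleGraph V) [DecidableRel G.Adj] (v : V) (S : Finset V) : ℕ :=
  (S.filter (G.Adj v)).card

/-- Number of edges with one endpoint in `X` and the other in `Y`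
(each edge counted once; for `X = Y` this is the number of edges inside `X`). -/
def eBtw (G : SimpleGraph V) [DecidableRel G.Adj] (X Y : Finset V) : ℕ :=
  (G.edgeFinset.filter (fun e => ∃ x ∈ X, ∃ y ∈ Y, e = s(x, y))).card

/-- The maximum cut of `G`: the maximum over `S ⊆ V` of the number of edges between
`S` and its complement. -/
def maxCut (G : SimpleGraph V) [DecidableRel G.Adj] : ℕ :=
  (Finset.univ : Finset (Finset V)).sup (fun S => eBtw G S (Finset.univ \ S))

/-!
Write `e(X)` and `e(X, Y)` for the number of edges inside `X` and between `X` and `Y`. As `C` is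
independent and each `c ∈ C` has as many neighbours in `A` as in `B`, the handshake lemma gives
`|E| = e(A) + e(B) + e(A, B) + 2 e(B, C)`, while the cut `(A ∪ C, B)` has `e(A, B) + e(B, C)` edges.
Summing (1) over `A` bounds `2 e(A)` by `e(A, B)` with slack `max(|A|, e(A, C))`, and likewise
(2) for `B`; by connectivity every vertex of `C` has a neighbour in `A`, so `e(A, C) = e(B, C) ≥ |C|`
and hence `3 (e(A) + e(B)) + |V| ≤ 3 e(A, B)`. Together with `2 |E| ≤ Δ |V|` this yields
`(3Δ + 2) |E| ≤ 6Δ · cut`, and `MaxCut(G) ≤ |E|`.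
-/

lemma Finset.sum_add_max_card_sum_le {ι : Type*} {s : Finset ι} {f g h : ι → ℕ}
    (hle : ∀ i ∈ s, f i + max 1 (g i) ≤ h i) :
    ∑ i ∈ s, f i + max #s (∑ i ∈ s, g i) ≤ ∑ i ∈ s, h i :=
  calc ∑ i ∈ s, f i + max #s (∑ i ∈ s, g i)
      ≤ ∑ i ∈ s, f i + ∑ i ∈ s, max 1 (g i) := by
        rw [card_eq_sum_ones]
        gcongr
        exact max_le (sum_le_sum fun _ _ => le_max_left _ _)
          (sum_le_sum fun _ _ => le_max_right _ _)
    _ = ∑ i ∈ s, (f i + max 1 (g i)) := sum_add_distrib.symm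
    _ ≤ ∑ i ∈ s, h i := sum_le_sum hle

section

variable {V : Type*}

lemma SimpleGraph.Connected.degree_pos_of_ne_bot [Fintype V] {G : SimpleGraph V}
    [DecidableRel G.Adj] (hG : G.Connected) (hbot : G ≠ ⊥) (v : V) : 0 < G.degree v := by
  obtain ⟨a, b, hab⟩ := SimpleGraph.ne_bot_iff_exists_adj.1 hbot
  have : Nontrivial V := ⟨⟨a, b, hab.ne⟩⟩
  exact hG.preconnected.degree_pos_of_nontrivial v

variable (G : SimpleGraph V) [DecidableRel G.Adj]

lemma two_mul_card_edgeFinset_le_card_mul_maxDegree [Fintype V] :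
    2 * #G.edgeFinset ≤ Fintype.card V * G.maxDegree := by
  rw [← G.sum_degrees_eq_twice_card_edges, ← card_univ, ← smul_eq_mul]
  exact sum_le_card_nsmul _ _ _ fun v _ => G.degree_le_maxDegree v

lemma maxCut_le_card_edgeFinset [Fintype V] [DecidableEq V] : maxCut G ≤ #G.edgeFinset :=
  Finset.sup_le fun _ _ => card_filter_le _ _

lemma degIn_univ [Fintype V] (v : V) : degIn G v univ = G.degree v := by
  rw [degIn, ← G.card_neighborFinset_eq_degree, G.neighborFinset_eq_filter]

lemma degIn_union [DecidableEq V] (v : V) {S T : Finset V} (hST : Disjoint S T) :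
    degIn G v (S ∪ T) = degIn G v S + degIn G v T := by
  rw [degIn, filter_union, card_union_of_disjoint (disjoint_filter_filter hST)]
  rfl

lemma degIn_eq_zero_of_forall_not_adj {v : V} {S : Finset V} (h : ∀ w ∈ S, ¬ G.Adj v w) :
    degIn G v S = 0 :=
  card_eq_zero.2 (filter_eq_empty_iff.2 fun w hw => h w hw)

lemma sum_degIn_comm (X Y : Finset V) :
    ∑ x ∈ X, degIn G x Y = ∑ y ∈ Y, degIn G y X := by
  simpa [bipartiteAbove, bipartiteBelow, degIn, G.adj_comm] using
    sum_card_bipartiteAbove_eq_sum_card_bipartiteBelow (s := X) (t := Y) G.Adj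

lemma eBtw_eq_sum_degIn [Fintype V] [DecidableEq V] {X Y : Finset V} (hXY : Disjoint X Y) :
    eBtw G X Y = ∑ x ∈ X, degIn G x Y := by
  have hsum : ∑ x ∈ X, degIn G x Y = #(G.interedges X Y) := by
    simp only [degIn, SimpleGraph.interedges_def, card_filter, sum_product]
  rw [hsum, eBtw]
  symm
  refine card_nbij (fun p => s(p.1, p.2)) ?_ ?_ ?_
  · rintro ⟨x, y⟩ hp
    rw [mem_coe, SimpleGraph.mem_interedges_iff] at hp
    rw [coe_filter, Set.mem_ofPred_eq, SimpleGraph.mem_edgeFinset]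
    exact ⟨hp.2.2, x, hp.1, y, hp.2.1, rfl⟩
  · rintro ⟨x₁, y₁⟩ hp₁ ⟨x₂, y₂⟩ hp₂ heq
    rw [mem_coe, SimpleGraph.mem_interedges_iff] at hp₁ hp₂
    rcases Sym2.eq_iff.1 heq with ⟨rfl, rfl⟩ | ⟨rfl, rfl⟩
    · rfl
    · exact (disjoint_left.1 hXY hp₁.1 hp₂.2.1).elim
  · intro e he
    rw [coe_filter, Set.mem_ofPred_eq, SimpleGraph.mem_edgeFinset] at he
    obtain ⟨he, x, hx, y, hy, rfl⟩ := he
    exact ⟨(x, y), (G.mk_mem_interedges_iff).2 ⟨hx, hy, he⟩, rfl⟩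

variable [Fintype V] [DecidableEq V] {A B C : Finset V}

lemma degree_eq_degIn_add_degIn_add_degIn (hU : A ∪ B ∪ C = univ) (hAB : Disjoint A B)
    (hABC : Disjoint (A ∪ B) C) (v : V) :
    G.degree v = degIn G v A + degIn G v B + degIn G v C := by
  rw [← degIn_univ, ← hU, degIn_union G v hABC, degIn_union G v hAB]

lemma two_mul_card_edgeFinset_eq_sum_degIn (hU : A ∪ B ∪ C = univ) (hAB : Disjoint A B)
    (hABC : Disjoint (A ∪ B) C) (hC : ∀ c ∈ C, ∀ c' ∈ C, ¬ G.Adj c c') :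
    2 * #G.edgeFinset = ∑ a ∈ A, degIn G a A + ∑ b ∈ B, degIn G b B
      + 2 * ∑ a ∈ A, degIn G a B + 2 * ∑ a ∈ A, degIn G a C + 2 * ∑ b ∈ B, degIn G b C := by
  have hCC : ∑ c ∈ C, degIn G c C = 0 :=
    sum_eq_zero fun c hc => degIn_eq_zero_of_forall_not_adj G (hC c hc)
  rw [← G.sum_degrees_eq_twice_card_edges, ← hU, sum_union hABC, sum_union hAB]
  simp only [degree_eq_degIn_add_degIn_add_degIn G hU hAB hABC, sum_add_distrib]
  rw [sum_degIn_comm G B A, sum_degIn_comm G C A, sum_degIn_comm G C B, hCC]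
  ring

end

lemma one_le_degIn_of_degree_pos (G : SimpleGraph V) [DecidableRel G.Adj] {A B C : Finset V}
    (hU : A ∪ B ∪ C = univ) (hAB : Disjoint A B) (hABC : Disjoint (A ∪ B) C)
    (hC : ∀ c ∈ C, ∀ c' ∈ C, ¬ G.Adj c c') {c : V} (hc : c ∈ C)
    (hAB_eq : degIn G c A = degIn G c B) (hpos : 0 < G.degree c) : 1 ≤ degIn G c A := by
  have := degree_eq_degIn_add_degIn_add_degIn G hU hAB hABC c
  rw [degIn_eq_zero_of_forall_not_adj G (hC c hc)] at this
  omega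

lemma three_mul_maxDegree_add_two_mul_card_edgeFinset_le (G : SimpleGraph V)
    [DecidableRel G.Adj] {A B C : Finset V}
    (hU : A ∪ B ∪ C = univ) (hAB : Disjoint A B) (hAC : Disjoint A C) (hBC : Disjoint B C)
    (h1 : ∀ a ∈ A, degIn G a A + max 1 (degIn G a C) ≤ degIn G a B)
    (h2 : ∀ b ∈ B, degIn G b B + max 1 (degIn G b C) ≤ degIn G b A)
    (h3 : ∀ c ∈ C, ∀ c' ∈ C, ¬ G.Adj c c')
    (h4 : ∀ c ∈ C, degIn G c A = degIn G c B) (hpos : ∀ c ∈ C, 0 < G.degree c) :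
    (3 * G.maxDegree + 2) * #G.edgeFinset ≤ 6 * G.maxDegree * eBtw G (A ∪ C) B := by
  have hABC : Disjoint (A ∪ B) C := disjoint_union_left.2 ⟨hAC, hBC⟩
  have hA := sum_add_max_card_sum_le h1
  have hB := sum_add_max_card_sum_le h2
  rw [sum_degIn_comm G B A] at hB
  have hC_AC : #C ≤ ∑ a ∈ A, degIn G a C := by
    rw [sum_degIn_comm]
    simpa using card_nsmul_le_sum C _ 1 fun c hc =>
      one_le_degIn_of_degree_pos G hU hAB hABC h3 hc (h4 c hc) (hpos c hc)
  have hAC_BC : ∑ a ∈ A, degIn G a C = ∑ b ∈ B, degIn G b C := by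
    rw [sum_degIn_comm G A C, sum_degIn_comm G B C]
    exact sum_congr rfl h4
  have hm := two_mul_card_edgeFinset_eq_sum_degIn G hU hAB hABC h3
  have hn := two_mul_card_edgeFinset_le_card_mul_maxDegree G
  rw [← card_univ, ← hU, card_union_of_disjoint hABC, card_union_of_disjoint hAB] at hn
  have hcut : eBtw G (A ∪ C) B = ∑ a ∈ A, degIn G a B + ∑ b ∈ B, degIn G b C := by
    rw [eBtw_eq_sum_degIn G (disjoint_union_left.2 ⟨hAB, hBC.symm⟩), sum_union hAC,
      sum_degIn_comm G C B]
  have key : 3 * (∑ a ∈ A, degIn G a A + ∑ b ∈ B, degIn G b B) + 2 * (#A + #B + #C)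
      ≤ 6 * ∑ a ∈ A, degIn G a B := by
    omega
  rw [hcut]
  nlinarith [Nat.mul_le_mul_right G.maxDegree key]

theorem cut_vs_maxcut (G : SimpleGraph V) [DecidableRel G.Adj]
    (hconn : G.Connected) (hΔ : 1 ≤ G.maxDegree)
    (A B C : Finset V)
    (hU : A ∪ B ∪ C = Finset.univ)
    (hAB : Disjoint A B) (hAC : Disjoint A C) (hBC : Disjoint B C)
    (h1 : ∀ a ∈ A, degIn G a A + max 1 (degIn G a C) ≤ degIn G a B)
    (h2 : ∀ b ∈ B, degIn G b B + max 1 (degIn G b C) ≤ degIn G b A)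
    (h3 : ∀ c ∈ C, ∀ c' ∈ C, ¬ G.Adj c c')
    (h4 : ∀ c ∈ C, degIn G c A = degIn G c B) :
    ((1 : ℚ) / 2 + 1 / (3 * G.maxDegree)) * maxCut G ≤ eBtw G (A ∪ C) B := by
  have hbot : G ≠ ⊥ := by rw [Ne, ← G.maxDegree_eq_zero_iff]; omega
  have hnat := three_mul_maxDegree_add_two_mul_card_edgeFinset_le G hU hAB hAC hBC h1 h2 h3 h4
    fun c _ => hconn.degree_pos_of_ne_bot hbot c
  have hΔ' : (1 : ℚ) ≤ G.maxDegree := by exact_mod_cast hΔ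
  calc ((1 : ℚ) / 2 + 1 / (3 * G.maxDegree)) * maxCut G
      = (3 * G.maxDegree + 2) * maxCut G / (6 * G.maxDegree) := by field_simp; ring
    _ ≤ (3 * G.maxDegree + 2) * #G.edgeFinset / (6 * G.maxDegree) := by
        gcongr
        exact_mod_cast maxCut_le_card_edgeFinset G
    _ ≤ eBtw G (A ∪ C) B := by
        rw [div_le_iff₀ (by positivity), mul_comm _ (6 * _ : ℚ)]
        exact_mod_cast hnat
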